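/- arXiv:1012.1796 — 2 statements merged into one kernel-verified Lean document; each statement's English description precedes it below -/
import Mathlib

section
/- The prefer-higher (Ford) algorithm generates a full de Bruijn sequence of order n over {0,...,t-1} for every n ≥ 1: starting with 0^n and always appending the largest symbol that forms a new n-tuple, the resulting sequence contains every n-tuple exactly once. -/
namespace DeBruijnPaper

/-- The word (block) of length `n` starting at position `i` of the sequence `a`. -/
def wordAt {t : ℕ} (a : ℕ → Fin t) (n i : ℕ) : Fin n → Fin t :=
  fun j => a (i + (j : ℕ))

/-- `w` has appeared as a block entirely within the first `k` symbols of `a`. -/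
def Seen {t : ℕ} (a : ℕ → Fin t) (n k : ℕ) (w : Fin n → Fin t) : Prop :=
  ∃ p, p + n ≤ k ∧ wordAt a n p = w

/-- The candidate `n`-word whose last symbol (at position `k`) is replaced by `c`,
preceded by the `n-1` symbols `a (k-(n-1)), …, a (k-1)`. -/
def cand {t : ℕ} (a : ℕ → Fin t) (n k : ℕ) (c : Fin t) : Fin n → Fin t :=
  fun j => if (j : ℕ) + 1 = n then c else a (k - (n - 1) + (j : ℕ))

/-- `P` is a preference function of span `m`: to each word of length `m` it assigns a
priority listing of the alphabet, i.e. `P w : Fin t → Fin t` is a bijection,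
`P w i` being the `i`-th preferred symbol after the word `w`. -/
def IsPrefFun (t m : ℕ) (P : (Fin m → Fin t) → Fin t → Fin t) : Prop :=
  ∀ w, Function.Bijective (P w)

/-- The sequence `a` (of length `L`) is produced by the greedy Algorithm P for the
preference function `P` of span `m`, at order `n`, from the initial word `I`:
it starts with `I`, every `n`-word occurs at most once, each appended symbol is the
highest-priority symbol (priorities determined by the last `m` symbols) forming a
new `n`-word, and the sequence is maximal (cannot be extended). -/
structure GenSeqFrom (t m n : ℕ) (I : Fin n → Fin t)
    (P : (Fin m → Fin t) → Fin t → Fin t) (a : ℕ → Fin t) (L : ℕ) : Prop where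
  len_ge : n ≤ L
  init : ∀ j : Fin n, a (j : ℕ) = I j
  inj : ∀ i j, i + n ≤ L → j + n ≤ L → wordAt a n i = wordAt a n j → i = j
  greedy : ∀ k, n ≤ k → k < L → ∃ i : Fin t,
    a k = P (wordAt a m (k - m)) i ∧
    ∀ j : Fin t, j < i → Seen a n k (cand a n k (P (wordAt a m (k - m)) j))
  maximal : ∀ c : Fin t, Seen a n L (cand a n L c)

/-- The sequence `a` of length `L` contains every `n`-word over the alphabet. -/
def Full (t n : ℕ) (a : ℕ → Fin t) (L : ℕ) : Prop :=
  ∀ w : Fin n → Fin t, ∃ p, p + n ≤ L ∧ wordAt a n p = w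

/-- The all-zero word `0^n`. -/
def zeroWord (t n : ℕ) [NeZero t] : Fin n → Fin t := fun _ => 0

/-- The least preference function induced by `P`:
`g(a_1,…,a_m) = (a_2,…,a_m, P_t(a_1,…,a_m))`. -/
def leastPF {t m : ℕ} (ht : 0 < t) (P : (Fin m → Fin t) → Fin t → Fin t)
    (w : Fin m → Fin t) : Fin m → Fin t :=
  fun j => if h : (j : ℕ) + 1 = m then P w ⟨t - 1, Nat.sub_lt ht Nat.one_pos⟩
           else w ⟨(j : ℕ) + 1, by have := j.isLt; omega⟩

/-- `g` has no cycles of any length other than the self-loop at the all-zero word. -/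
def OnlyZeroCycle {t m : ℕ} [NeZero t] (g : (Fin m → Fin t) → Fin m → Fin t) : Prop :=
  g (fun _ => 0) = (fun _ => 0) ∧
  ∀ (x : Fin m → Fin t) (l : ℕ), 0 < l → g^[l] x = x → x = fun _ => 0

/-- Extend a finite sequence by zeros to a sequence indexed by `ℕ`. -/
def ext {t L : ℕ} [NeZero t] (S : Fin L → Fin t) : ℕ → Fin t :=
  fun i => if h : i < L then S ⟨i, h⟩ else 0


section FordAux

variable {t n : ℕ} [NeZero t]

/-- Ford preference: priority list `(t-1, …, 0)`. -/
abbrev FordP (t : ℕ) [NeZero t] : (Fin 0 → Fin t) → Fin t → Fin t :=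
  fun _ i => ⟨t - 1 - (i : ℕ), by have := i.isLt; omega⟩

/-- Shift left and append `c`. -/
def snocz (w : Fin n → Fin t) (c : Fin t) : Fin n → Fin t :=
  fun j => if h : (j : ℕ) + 1 = n then c
           else w ⟨(j : ℕ) + 1, by have := j.isLt; omega⟩

lemma wordAt_zero {a : ℕ → Fin t} {L : ℕ}
    (hG : GenSeqFrom t 0 n (zeroWord t n) (FordP t) a L) :
    wordAt a n 0 = zeroWord t n := by
  funext j
  simpa [wordAt] using hG.init j

/-- Positions with equal "tails" and equal preceding symbol are equal. -/
lemma tail_injOn {a : ℕ → Fin t} {L : ℕ}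
    (hG : GenSeqFrom t 0 n (zeroWord t n) (FordP t) a L)
    (v : Fin n → Fin t) (S : Finset ℕ)
    (hS : ∀ q ∈ S, 1 ≤ q ∧ (q - 1) + n ≤ L ∧
      ∀ j : Fin n, 1 ≤ (j : ℕ) → a (q - 1 + (j : ℕ)) = v j) :
    Set.InjOn (fun q => a (q - 1)) (S : Set ℕ) := by
  intro q hq q' hq' heq
  obtain ⟨h1, h2, h3⟩ := hS q hq
  obtain ⟨h1', h2', h3'⟩ := hS q' hq'
  have hw : wordAt a n (q - 1) = wordAt a n (q' - 1) := by
    funext j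
    rcases Nat.eq_zero_or_pos (j : ℕ) with hj | hj
    · simpa [wordAt, hj] using heq
    · rw [wordAt, wordAt, h3 j hj, h3' j hj]
  have := hG.inj _ _ h2 h2' hw
  omega

lemma tail_card_le {a : ℕ → Fin t} {L : ℕ}
    (hG : GenSeqFrom t 0 n (zeroWord t n) (FordP t) a L)
    (v : Fin n → Fin t) (S : Finset ℕ)
    (hS : ∀ q ∈ S, 1 ≤ q ∧ (q - 1) + n ≤ L ∧
      ∀ j : Fin n, 1 ≤ (j : ℕ) → a (q - 1 + (j : ℕ)) = v j) :
    S.card ≤ t := by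
  classical
  have := Finset.card_le_card_of_injOn (fun q => a (q - 1))
    (fun q _ => Finset.mem_univ _) (tail_injOn hG v S hS)
  simpa using this

lemma tail_surj {a : ℕ → Fin t} {L : ℕ}
    (hG : GenSeqFrom t 0 n (zeroWord t n) (FordP t) a L)
    (v : Fin n → Fin t) (S : Finset ℕ)
    (hS : ∀ q ∈ S, 1 ≤ q ∧ (q - 1) + n ≤ L ∧
      ∀ j : Fin n, 1 ≤ (j : ℕ) → a (q - 1 + (j : ℕ)) = v j)
    (hcard : t ≤ S.card) (x : Fin t) :
    ∃ q ∈ S, a (q - 1) = x := by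
  classical
  have himg : (S.image fun q => a (q - 1)).card = S.card :=
    Finset.card_image_of_injOn (tail_injOn hG v S hS)
  have : S.image (fun q => a (q - 1)) = Finset.univ := by
    apply Finset.eq_univ_of_card
    have hle : (S.image fun q => a (q - 1)).card ≤ Fintype.card (Fin t) :=
      Finset.card_le_univ _
    simp only [Fintype.card_fin] at hle ⊢
    omega
  have hx : x ∈ S.image (fun q => a (q - 1)) := this ▸ Finset.mem_univ x
  simpa using hx


/-- When the algorithm halts, the last `n-1` symbols are all `0`. -/
lemma suffix_zero (hn : 1 ≤ n) {a : ℕ → Fin t} {L : ℕ}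
    (hG : GenSeqFrom t 0 n (zeroWord t n) (FordP t) a L) :
    ∀ j : ℕ, j + 1 < n → a (L - (n - 1) + j) = 0 := by
  classical
  have hL := hG.len_ge
  choose f hf1 hf2 using hG.maximal
  have hlast : ∀ c, a (f c + (n - 1)) = c := by
    intro c
    have := congrFun (hf2 c) ⟨n - 1, by omega⟩
    simpa [wordAt, cand, Nat.sub_add_cancel hn] using this
  have hfinj : Function.Injective f := by
    intro c c' h
    rw [← hlast c, ← hlast c', h]
  have htail : ∀ c, ∀ j : Fin n, 1 ≤ (j : ℕ) →
      a (f c + ((j : ℕ) - 1)) = a (L - (n - 1) + ((j : ℕ) - 1)) := by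
    intro c j hj
    have hjn := j.isLt
    have := congrFun (hf2 c) ⟨(j : ℕ) - 1, by omega⟩
    rw [wordAt, cand] at this
    simpa [if_neg (by omega : ¬ ((j : ℕ) - 1 + 1 = n))] using this
  have hexz : ∃ c, f c = 0 := by
    by_contra h0
    push_neg at h0
    set v : Fin n → Fin t := fun j => a (L - (n - 1) + ((j : ℕ) - 1)) with hv
    set S : Finset ℕ := insert (L - n + 1) (Finset.image f Finset.univ) with hSdef
    have hfc_le : ∀ c, f c ≤ L - n := fun c => by have := hf1 c; omega
    have hS : ∀ q ∈ S, 1 ≤ q ∧ (q - 1) + n ≤ L ∧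
        ∀ j : Fin n, 1 ≤ (j : ℕ) → a (q - 1 + (j : ℕ)) = v j := by
      intro q hq
      rw [hSdef, Finset.mem_insert] at hq
      rcases hq with hq | hq
      · subst hq
        refine ⟨by omega, by omega, fun j hj => ?_⟩
        have hjn := j.isLt
        show a (L - n + 1 - 1 + (j : ℕ)) = a (L - (n - 1) + ((j : ℕ) - 1))
        congr 1
        omega
      · obtain ⟨c, _, hc⟩ := Finset.mem_image.mp hq
        subst hc
        have h1 : 1 ≤ f c := Nat.one_le_iff_ne_zero.mpr (h0 c)
        refine ⟨h1, by have := hf1 c; omega, fun j hj => ?_⟩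
        have := htail c j hj
        show a (f c - 1 + (j : ℕ)) = v j
        rw [hv]
        rw [show f c - 1 + (j : ℕ) = f c + ((j : ℕ) - 1) by omega]
        exact this
    have hcard : S.card = t + 1 := by
      rw [hSdef, Finset.card_insert_of_notMem, Finset.card_image_of_injective _ hfinj,
        Finset.card_univ, Fintype.card_fin]
      intro hmem
      obtain ⟨c, _, hc⟩ := Finset.mem_image.mp hmem
      have := hfc_le c
      omega
    have := tail_card_le hG v S hS
    omega
  obtain ⟨c0, hc0⟩ := hexz
  intro j hj
  have h00 : wordAt a n 0 = cand a n L c0 := by rw [← hc0]; exact hf2 c0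
  have := congrFun h00 ⟨j, by omega⟩
  rw [wordAt, cand, if_neg (by omega : ¬ ((j : ℕ) + 1 = n))] at this
  rw [← this]
  simpa [zeroWord] using hG.init ⟨j, by omega⟩

/-- Upward closure: if `tail(w)·0` appears, then `tail(w)·c` appears for every `c`. -/
lemma up_closure (ht : 2 ≤ t) (hn : 1 ≤ n) {a : ℕ → Fin t} {L : ℕ}
    (hG : GenSeqFrom t 0 n (zeroWord t n) (FordP t) a L)
    (w : Fin n → Fin t)
    (hA : ∃ p, p + n ≤ L ∧ wordAt a n p = snocz w 0) :
    ∀ c : Fin t, ∃ p, p + n ≤ L ∧ wordAt a n p = snocz w c := by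
  obtain ⟨p0, hp0, hw0⟩ := hA
  rcases Nat.eq_zero_or_pos p0 with hz | hpos
  · -- occurrence inside the initial word : tail of w is all zeros
    subst hz
    have tz : ∀ j : Fin n, 1 ≤ (j : ℕ) → w j = 0 := by
      intro j hj
      have hjn := j.isLt
      have := congrFun hw0 ⟨(j : ℕ) - 1, by omega⟩
      rw [wordAt, snocz, dif_neg (by omega : ¬ ((j : ℕ) - 1 + 1 = n))] at this
      have hz0 : a (0 + ((j : ℕ) - 1)) = 0 := by
        simpa [zeroWord] using hG.init ⟨(j : ℕ) - 1, by omega⟩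
      rw [hz0] at this
      rw [show (⟨(j : ℕ) - 1 + 1, by omega⟩ : Fin n) = j from
        Fin.ext (show (j : ℕ) - 1 + 1 = (j : ℕ) by omega)] at this
      exact this.symm
    intro c
    obtain ⟨q, hq, hcq⟩ := hG.maximal c
    refine ⟨q, hq, ?_⟩
    rw [hcq]
    funext j
    rw [cand, snocz]
    by_cases hjn : (j : ℕ) + 1 = n
    · simp [hjn]
    · rw [if_neg hjn, dif_neg hjn]
      rw [suffix_zero hn hG (j : ℕ) (by have := j.isLt; omega)]
      exact (tz ⟨(j : ℕ) + 1, by have := j.isLt; omega⟩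
        (show 1 ≤ (j : ℕ) + 1 by omega)).symm
  · -- occurrence with a greedily appended `0`
    obtain ⟨p', rfl⟩ : ∃ p', p0 = p' + 1 := ⟨p0 - 1, by omega⟩
    set k := p' + n with hk
    have hkn : n ≤ k := by omega
    have hkL : k < L := by omega
    obtain ⟨i, hi1, hi2⟩ := hG.greedy k hkn hkL
    have hak : a k = 0 := by
      have := congrFun hw0 ⟨n - 1, by omega⟩
      rw [wordAt, snocz, dif_pos (by omega : n - 1 + 1 = n)] at this
      rw [show p' + 1 + (n - 1) = k by omega] at this
      exact this
    have hival : (i : ℕ) = t - 1 := by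
      have h := hi1.symm.trans hak
      have h2 : t - 1 - (i : ℕ) = 0 := by
        simpa using congrArg Fin.val h
      have := i.isLt
      omega
    have hcand : ∀ c : Fin t, cand a n k c = snocz w c := by
      intro c
      funext j
      rw [cand, snocz]
      by_cases hjn : (j : ℕ) + 1 = n
      · simp [hjn]
      · rw [if_neg hjn, dif_neg hjn]
        have hidx : k - (n - 1) + (j : ℕ) = p' + 1 + (j : ℕ) := by omega
        rw [hidx]
        have := congrFun hw0 j
        rw [wordAt, snocz, dif_neg hjn] at this
        exact this
    intro c
    by_cases hc0 : c = 0
    · exact ⟨p' + 1, hp0, by rw [hw0, hc0]⟩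
    · have hc1 : 1 ≤ (c : ℕ) := by
        rcases Nat.eq_zero_or_pos (c : ℕ) with h | h
        · exact absurd (Fin.ext (by simp [h]) : c = (⟨0, by omega⟩ : Fin t)) (by
            intro h'; apply hc0; rw [h']; exact Fin.ext (by simp))
        · exact h
      have hct := c.isLt
      have hji : (⟨t - 1 - (c : ℕ), by omega⟩ : Fin t) < i := by
        rw [Fin.lt_def, hival]
        show t - 1 - (c : ℕ) < t - 1
        omega
      have hseen := hi2 ⟨t - 1 - (c : ℕ), by omega⟩ hji
      have hP : (FordP t) (wordAt a 0 (k - 0)) ⟨t - 1 - (c : ℕ), by omega⟩ = c :=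
        Fin.ext (by show t - 1 - (t - 1 - (c : ℕ)) = (c : ℕ); omega)
      rw [hP] at hseen
      obtain ⟨q, hq, hcq⟩ := hseen
      exact ⟨q, by omega, by rw [hcq, hcand]⟩


/-- If `tail(w)·0` appears then `w` itself appears. -/
lemma back_step (ht : 2 ≤ t) (hn : 1 ≤ n) {a : ℕ → Fin t} {L : ℕ}
    (hG : GenSeqFrom t 0 n (zeroWord t n) (FordP t) a L)
    (w : Fin n → Fin t)
    (hA : ∃ p, p + n ≤ L ∧ wordAt a n p = snocz w 0) :
    ∃ p, p + n ≤ L ∧ wordAt a n p = w := by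
  classical
  choose f hf1 hf2 using up_closure ht hn hG w hA
  have hlast : ∀ c, a (f c + (n - 1)) = c := by
    intro c
    have := congrFun (hf2 c) ⟨n - 1, by omega⟩
    rw [wordAt, snocz, dif_pos (by omega : n - 1 + 1 = n)] at this
    exact this
  have hfinj : Function.Injective f := by
    intro c c' h
    rw [← hlast c, ← hlast c', h]
  have htail : ∀ c, ∀ j : Fin n, 1 ≤ (j : ℕ) → a (f c + ((j : ℕ) - 1)) = w j := by
    intro c j hj
    have hjn := j.isLt
    have := congrFun (hf2 c) ⟨(j : ℕ) - 1, by omega⟩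
    rw [wordAt, snocz, dif_neg (by omega : ¬ ((j : ℕ) - 1 + 1 = n))] at this
    rw [show (⟨(j : ℕ) - 1 + 1, by omega⟩ : Fin n) = j from
      Fin.ext (show (j : ℕ) - 1 + 1 = (j : ℕ) by omega)] at this
    exact this
  -- common final step
  have finish : ∀ S : Finset ℕ,
      (∀ q ∈ S, 1 ≤ q ∧ (q - 1) + n ≤ L ∧
        ∀ j : Fin n, 1 ≤ (j : ℕ) → a (q - 1 + (j : ℕ)) = w j) →
      t ≤ S.card → ∃ p, p + n ≤ L ∧ wordAt a n p = w := by
    intro S hS hcard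
    obtain ⟨q, hqS, hq0⟩ := tail_surj hG w S hS hcard (w ⟨0, by omega⟩)
    obtain ⟨h1, h2, h3⟩ := hS q hqS
    refine ⟨q - 1, h2, ?_⟩
    funext j
    rcases Nat.eq_zero_or_pos (j : ℕ) with hj | hj
    · have : j = ⟨0, by omega⟩ := Fin.ext hj
      rw [this]
      simpa [wordAt] using hq0
    · rw [wordAt]
      exact h3 j hj
  by_cases h0 : ∃ c, f c = 0
  · -- tail of w is all zeros; use the terminal occurrence as extra position
    obtain ⟨c0, hc0⟩ := h0
    have hL := hG.len_ge
    have tz : ∀ j : Fin n, 1 ≤ (j : ℕ) → w j = 0 := by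
      intro j hj
      have hjn := j.isLt
      have := htail c0 j hj
      rw [hc0] at this
      rw [← this]
      simpa [zeroWord] using hG.init ⟨(j : ℕ) - 1, by omega⟩
    set S : Finset ℕ := insert (L - n + 1) ((Finset.image f Finset.univ).erase 0)
      with hSdef
    have hfc_le : ∀ c, f c ≤ L - n := fun c => by have := hf1 c; omega
    have hS : ∀ q ∈ S, 1 ≤ q ∧ (q - 1) + n ≤ L ∧
        ∀ j : Fin n, 1 ≤ (j : ℕ) → a (q - 1 + (j : ℕ)) = w j := by
      intro q hq
      rw [hSdef, Finset.mem_insert] at hq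
      rcases hq with hq | hq
      · subst hq
        refine ⟨by omega, by omega, fun j hj => ?_⟩
        have hjn := j.isLt
        rw [show L - n + 1 - 1 + (j : ℕ) = L - (n - 1) + ((j : ℕ) - 1) by omega]
        rw [suffix_zero hn hG ((j : ℕ) - 1) (by omega)]
        exact (tz j hj).symm
      · obtain ⟨hqne, hmem⟩ := Finset.mem_erase.mp hq
        obtain ⟨c, _, hc⟩ := Finset.mem_image.mp hmem
        subst hc
        have h1 : 1 ≤ f c := Nat.one_le_iff_ne_zero.mpr hqne
        refine ⟨h1, by have := hf1 c; omega, fun j hj => ?_⟩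
        rw [show f c - 1 + (j : ℕ) = f c + ((j : ℕ) - 1) by omega]
        exact htail c j hj
    apply finish S hS
    have hz_mem : 0 ∈ Finset.image f Finset.univ :=
      Finset.mem_image.mpr ⟨c0, Finset.mem_univ _, hc0⟩
    have hcard1 : (Finset.image f Finset.univ).card = t := by
      rw [Finset.card_image_of_injective _ hfinj, Finset.card_univ, Fintype.card_fin]
    have hnot : L - n + 1 ∉ (Finset.image f Finset.univ).erase 0 := by
      intro hmem
      obtain ⟨c, _, hc⟩ := Finset.mem_image.mp (Finset.mem_of_mem_erase hmem)
      have := hfc_le c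
      omega
    rw [hSdef, Finset.card_insert_of_notMem hnot, Finset.card_erase_of_mem hz_mem,
      hcard1]
    omega
  · push_neg at h0
    set S : Finset ℕ := Finset.image f Finset.univ with hSdef
    have hS : ∀ q ∈ S, 1 ≤ q ∧ (q - 1) + n ≤ L ∧
        ∀ j : Fin n, 1 ≤ (j : ℕ) → a (q - 1 + (j : ℕ)) = w j := by
      intro q hq
      obtain ⟨c, _, hc⟩ := Finset.mem_image.mp hq
      subst hc
      have h1 : 1 ≤ f c := Nat.one_le_iff_ne_zero.mpr (h0 c)
      refine ⟨h1, by have := hf1 c; omega, fun j hj => ?_⟩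
      rw [show f c - 1 + (j : ℕ) = f c + ((j : ℕ) - 1) by omega]
      exact htail c j hj
    apply finish S hS
    rw [hSdef, Finset.card_image_of_injective _ hfinj, Finset.card_univ,
      Fintype.card_fin]

/-- Fullness of any Ford-generated sequence. -/
lemma ford_full (ht : 2 ≤ t) (hn : 1 ≤ n) {a : ℕ → Fin t} {L : ℕ}
    (hG : GenSeqFrom t 0 n (zeroWord t n) (FordP t) a L) :
    ∀ w : Fin n → Fin t, ∃ p, p + n ≤ L ∧ wordAt a n p = w := by
  have key : ∀ k : ℕ, ∀ w : Fin n → Fin t,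
      (∀ j : Fin n, k ≤ (j : ℕ) → w j = 0) → ∃ p, p + n ≤ L ∧ wordAt a n p = w := by
    intro k
    induction k with
    | zero =>
      intro w hw
      have : w = zeroWord t n := funext fun j => hw j (Nat.zero_le _)
      rw [this]
      exact ⟨0, by have := hG.len_ge; omega, wordAt_zero hG⟩
    | succ k ih =>
      intro w hw
      apply back_step ht hn hG
      apply ih
      intro j hj
      have hjn := j.isLt
      rw [snocz]
      by_cases hjn1 : (j : ℕ) + 1 = n
      · rw [dif_pos hjn1]
      · rw [dif_neg hjn1]
        exact hw ⟨(j : ℕ) + 1, by omega⟩ (by show k + 1 ≤ (j : ℕ) + 1; omega)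
  intro w
  exact key n w (fun j hj => absurd j.isLt (by omega))


/-- `prf t i` is the `i`-th preferred symbol, `t-1-i`. -/
def prf (t : ℕ) [NeZero t] (i : ℕ) : Fin t :=
  ⟨t - 1 - i, by have := Nat.pos_of_ne_zero (NeZero.ne t); omega⟩

open Classical in
/-- One greedy step given the earlier symbols `b`. -/
noncomputable def gstep (t n : ℕ) [NeZero t] (b : ℕ → Fin t) (k : ℕ) : Fin t :=
  if h : n ≤ k ∧ ∃ i : ℕ, ¬ Seen b n k (cand b n k (prf t i)) then prf t (Nat.find h.2)
  else 0

/-- Iterated greedy construction: `gpre t n k` is correct on positions `< k`. -/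
noncomputable def gpre (t n : ℕ) [NeZero t] : ℕ → ℕ → Fin t
  | 0 => fun _ => 0
  | k + 1 => fun i => if i = k then gstep t n (gpre t n k) k else gpre t n k i

/-- The greedy Ford sequence. -/
noncomputable def ga (t n : ℕ) [NeZero t] : ℕ → Fin t := fun i => gpre t n (i + 1) i

lemma gpre_eq : ∀ k i, i < k → gpre t n k i = ga t n i := by
  intro k
  induction k with
  | zero => intro i h; omega
  | succ k ih =>
    intro i h
    by_cases hik : i = k
    · subst hik; rfl
    · have h2 : gpre t n (k + 1) i = gpre t n k i := by simp [gpre, hik]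
      rw [h2, ih i (by omega)]

lemma ga_init (i : ℕ) (h : i < n) : ga t n i = 0 := by
  show gpre t n (i + 1) i = 0
  have h2 : gpre t n (i + 1) i = gstep t n (gpre t n i) i := by simp [gpre]
  rw [h2, gstep, dif_neg]
  rintro ⟨h1, -⟩
  omega

lemma wordAt_congr {b c : ℕ → Fin t} {k p : ℕ} (h : ∀ i < k, b i = c i)
    (hp : p + n ≤ k) : wordAt b n p = wordAt c n p :=
  funext fun j => h _ (by have := j.isLt; omega)

lemma seen_congr {b c : ℕ → Fin t} {k : ℕ} (h : ∀ i < k, b i = c i)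
    (w : Fin n → Fin t) : Seen b n k w ↔ Seen c n k w := by
  constructor
  · rintro ⟨p, hp, hw⟩; exact ⟨p, hp, (wordAt_congr h hp).symm.trans hw⟩
  · rintro ⟨p, hp, hw⟩; exact ⟨p, hp, (wordAt_congr h hp).trans hw⟩

lemma cand_congr {b c : ℕ → Fin t} {k : ℕ} (hn : 1 ≤ n) (hk : n ≤ k)
    (h : ∀ i < k, b i = c i) (x : Fin t) : cand b n k x = cand c n k x := by
  funext j
  rw [cand, cand]
  by_cases hj : (j : ℕ) + 1 = n
  · simp [hj]
  · rw [if_neg hj, if_neg hj]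
    exact h _ (by have := j.isLt; omega)

open Classical in
lemma ga_spec (hn : 1 ≤ n) (k : ℕ) (hk : n ≤ k)
    (hx : ∃ x : Fin t, ¬ Seen (ga t n) n k (cand (ga t n) n k x)) :
    ∃ i0 : ℕ, i0 < t ∧ ga t n k = prf t i0 ∧
      ¬ Seen (ga t n) n k (cand (ga t n) n k (prf t i0)) ∧
      ∀ j : ℕ, j < i0 → Seen (ga t n) n k (cand (ga t n) n k (prf t j)) := by
  have htpos : 0 < t := Nat.pos_of_ne_zero (NeZero.ne t)
  have hag : ∀ i < k, gpre t n k i = ga t n i := fun i h => gpre_eq k i h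
  have hcand : ∀ x : Fin t, cand (gpre t n k) n k x = cand (ga t n) n k x :=
    cand_congr hn hk hag
  have hseen : ∀ w, Seen (gpre t n k) n k w ↔ Seen (ga t n) n k w :=
    seen_congr hag
  have hcond : n ≤ k ∧
      ∃ i : ℕ, ¬ Seen (gpre t n k) n k (cand (gpre t n k) n k (prf t i)) := by
    obtain ⟨x, hxs⟩ := hx
    refine ⟨hk, ⟨t - 1 - (x : ℕ), ?_⟩⟩
    have hpx : prf t (t - 1 - (x : ℕ)) = x :=
      Fin.ext (show t - 1 - (t - 1 - (x : ℕ)) = (x : ℕ) by have := x.isLt; omega)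
    rw [hpx, hcand, hseen]
    exact hxs
  have hgak : ga t n k = gstep t n (gpre t n k) k := by
    show gpre t n (k + 1) k = _
    simp [gpre]
  have e : gstep t n (gpre t n k) k = prf t (Nat.find hcond.2) := dif_pos hcond
  refine ⟨Nat.find hcond.2, ?_, hgak.trans e, ?_, ?_⟩
  · obtain ⟨iw, hiw⟩ := hcond.2
    have hP : ¬ Seen (gpre t n k) n k (cand (gpre t n k) n k (prf t (min iw (t - 1)))) := by
      rw [show prf t (min iw (t - 1)) = prf t iw from
        Fin.ext (show t - 1 - min iw (t - 1) = t - 1 - iw by omega)]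
      exact hiw
    have := Nat.find_min' hcond.2 hP
    omega
  · have := Nat.find_spec hcond.2
    rwa [hcand, hseen] at this
  · intro j hj
    have := Nat.find_min hcond.2 hj
    rw [not_not, hcand, hseen] at this
    exact this

lemma ga_not_seen (hn : 1 ≤ n) (q k : ℕ) (hq : 1 ≤ q) (hk : k = q + (n - 1))
    (hx : ∃ x : Fin t, ¬ Seen (ga t n) n k (cand (ga t n) n k x)) :
    ¬ Seen (ga t n) n k (wordAt (ga t n) n q) := by
  have hkn : n ≤ k := by omega
  obtain ⟨i0, hi0t, hval, hnseen, -⟩ := ga_spec hn k hkn hx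
  have hcw : cand (ga t n) n k (prf t i0) = wordAt (ga t n) n q := by
    funext j
    rw [cand, wordAt]
    by_cases hj : (j : ℕ) + 1 = n
    · rw [if_pos hj, ← hval]
      congr 1
      omega
    · rw [if_neg hj]
      congr 1
      have := j.isLt
      omega
  rw [← hcw]
  exact hnseen

lemma ga_term (hn : 1 ≤ n) :
    ∃ k, n ≤ k ∧ ∀ x : Fin t, Seen (ga t n) n k (cand (ga t n) n k x) := by
  by_contra hcon
  push_neg at hcon
  have hinj : Function.Injective fun p => wordAt (ga t n) n p := by
    have key : ∀ p q : ℕ, p < q → wordAt (ga t n) n p ≠ wordAt (ga t n) n q := by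
      intro p q hpq heq
      obtain ⟨x, hxs⟩ := hcon (q + (n - 1)) (by omega)
      have hns := ga_not_seen hn q (q + (n - 1)) (by omega) rfl ⟨x, hxs⟩
      exact hns ⟨p, by omega, heq⟩
    intro p q h
    rcases lt_trichotomy p q with h' | h' | h'
    · exact absurd h (key p q h')
    · exact h'
    · exact absurd h.symm (key q p h')
  obtain ⟨p, q, hne, heq⟩ :=
    Finite.exists_ne_map_eq_of_infinite fun p => wordAt (ga t n) n p
  exact hne (hinj heq)

open Classical in
lemma ford_exists (ht : 2 ≤ t) (hn : 1 ≤ n) :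
    ∃ (a : ℕ → Fin t) (L : ℕ), GenSeqFrom t 0 n (zeroWord t n) (FordP t) a L := by
  obtain hterm := ga_term (t := t) hn
  have key : ∀ p q : ℕ, p < q → q + n ≤ Nat.find hterm →
      wordAt (ga t n) n p ≠ wordAt (ga t n) n q := by
    intro p q hpq hqL heq
    have hkL : q + (n - 1) < Nat.find hterm := by omega
    have hx := Nat.find_min hterm hkL
    push_neg at hx
    have hx' := hx (by omega)
    have hns := ga_not_seen hn q (q + (n - 1)) (by omega) rfl hx'
    exact hns ⟨p, by omega, heq⟩
  refine ⟨ga t n, Nat.find hterm, (Nat.find_spec hterm).1, ?_, ?_, ?_,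
    (Nat.find_spec hterm).2⟩
  · intro j
    rw [ga_init (t := t) _ j.isLt]
    rfl
  · intro p q hp hq heq
    rcases lt_trichotomy p q with h' | h' | h'
    · exact absurd heq (key p q h' hq)
    · exact h'
    · exact absurd heq.symm (key q p h' hp)
  · intro k hkn hkL
    have hx := Nat.find_min hterm hkL
    push_neg at hx
    have hx' := hx hkn
    obtain ⟨i0, hi0t, hval, hnseen, hmin⟩ := ga_spec hn k hkn hx'
    refine ⟨⟨i0, hi0t⟩, hval, ?_⟩
    intro j hj
    exact hmin (j : ℕ) hj

end FordAux

/-- The prefer-higher (Ford) algorithm — the span-`0` preference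
function with priority listing `(t-1, t-2, …, 0)` — generates, from the initial word
`0^n`, a sequence containing every `n`-word exactly once, for every order `n ≥ 1`. -/
theorem statement_15 (t n : ℕ) [NeZero t] (ht : 2 ≤ t) (hn : 1 ≤ n) :
    (∃ (a : ℕ → Fin t) (L : ℕ),
      GenSeqFrom t 0 n (zeroWord t n)
        (fun _ i => ⟨t - 1 - (i : ℕ), by have := i.isLt; omega⟩) a L) ∧
    ∀ (a : ℕ → Fin t) (L : ℕ),
      GenSeqFrom t 0 n (zeroWord t n)
        (fun _ i => ⟨t - 1 - (i : ℕ), by have := i.isLt; omega⟩) a L →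
      ∀ w : Fin n → Fin t, ∃! p, p + n ≤ L ∧ wordAt a n p = w := by
  constructor
  · exact ford_exists ht hn
  · intro a L hG w
    obtain ⟨p, hp, hw⟩ := ford_full ht hn hG w
    refine ⟨p, ⟨hp, hw⟩, ?_⟩
    rintro q ⟨hq, hwq⟩
    exact hG.inj q p hq hp (hwq.trans hw.symm)
end DeBruijnPaper
end

section
/- For t = 2, any preference function of span 1 (i.e., priorities depending only on the previous bit) whose least preference function has no cycle other than the fixed point at 0 must be the prefer-one function: after either bit, prefer 1 over 0. Consequently there are no binary de Bruijn sequences of preference function complexity exactly 1. -/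
namespace DeBruijnPaper

section Aux

variable {n L : ℕ} {a : ℕ → Fin 2}

lemma fin2_em (x : Fin 2) : x = 0 ∨ x = 1 := by revert x; decide

lemma uniq (hfull : ∀ w : Fin n → Fin 2, ∃! p, p + n ≤ L ∧ wordAt a n p = w)
    {p q : ℕ} (hp : p + n ≤ L) (hq : q + n ≤ L)
    (h : wordAt a n p = wordAt a n q) : p = q := by
  obtain ⟨r, _, hr⟩ := hfull (wordAt a n q)
  rw [hr p ⟨hp, h⟩, hr q ⟨hq, rfl⟩]

lemma word1_eq (k : ℕ) : wordAt a 1 k = fun _ => a k := by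
  funext j
  show a (k + (j : ℕ)) = a k
  have : (j : ℕ) = 0 := by omega
  rw [this, Nat.add_zero]

/-- Whenever we write the least-preferred symbol after `1`, the sibling was seen:
if `P(1)` prefers `0`, the unique occurrence of `1^n` yields a duplicate of `0·1^(n-1)`. -/
lemma F3 (hn : 2 ≤ n) (ha0 : ∀ i, i < n → a i = 0)
    (hfull : ∀ w : Fin n → Fin 2, ∃! p, p + n ≤ L ∧ wordAt a n p = w)
    {P : (Fin 1 → Fin 2) → Fin 2 → Fin 2}
    (hG : GenSeqFrom 2 1 n (zeroWord 2 n) P a L) :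
    P (fun _ => 1) 0 = 1 := by
  obtain ⟨p, ⟨hpL, hpw⟩, -⟩ := hfull (fun _ => 1)
  have hap : ∀ j, j < n → a (p + j) = 1 := fun j hj => congrFun hpw ⟨j, hj⟩
  have hpn : n ≤ p := by
    by_contra h
    push_neg at h
    have h1 := hap 0 (by omega)
    rw [Nat.add_zero, ha0 p h] at h1
    exact absurd h1 (by decide)
  obtain ⟨i, hik, hseen⟩ := hG.greedy (p + n - 1) (by omega) (by omega)
  have hw : wordAt a 1 (p + n - 1 - 1) = fun _ => (1 : Fin 2) := by
    rw [word1_eq]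
    funext x
    have e : p + n - 1 - 1 = p + (n - 2) := by omega
    rw [e, hap (n-2) (by omega)]
  have hak : a (p + n - 1) = 1 := by
    have e : p + n - 1 = p + (n - 1) := by omega
    rw [e, hap (n-1) (by omega)]
  rcases fin2_em (P (fun _ => 1) 0) with hP0 | hP0
  swap
  · exact hP0
  exfalso
  have hi1 : i = 1 := by
    rcases fin2_em i with e | e
    · exfalso
      rw [e, hw, hP0] at hik
      exact absurd (hik.symm.trans hak) (by decide)
    · exact e
  have hs := hseen 0 (by rw [hi1]; decide)
  rw [hw, hP0] at hs
  obtain ⟨q, hqk, hqw⟩ := hs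
  have hq : ∀ j, j < n → a (q + j) = if j + 1 = n then 0 else a (p + j) := by
    intro j hj
    have h := congrFun hqw ⟨j, hj⟩
    have e : p + n - 1 - (n - 1) = p := by omega
    simpa [wordAt, cand, e] using h
  have hqa : ∀ j, j < n - 1 → a (q + j) = 1 := by
    intro j hj
    rw [hq j (by omega), if_neg (by omega)]
    exact hap j (by omega)
  have hqn : n ≤ q := by
    by_contra h
    push_neg at h
    have h1 := hqa 0 (by omega)
    rw [Nat.add_zero, ha0 q h] at h1
    exact absurd h1 (by decide)
  have hqp : q + 1 ≤ p := by omega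
  have hpm : a (p - 1) = 0 := by
    rcases fin2_em (a (p-1)) with h | h
    · exact h
    exfalso
    have hw2 : wordAt a n (p-1) = wordAt a n p := by
      funext j
      show a (p - 1 + (j:ℕ)) = a (p + (j:ℕ))
      rcases Nat.eq_zero_or_pos (j:ℕ) with h0 | h0
      · have h1 := hap 0 (by omega)
        rw [Nat.add_zero] at h1
        rw [h0, Nat.add_zero, Nat.add_zero, h, h1]
      · have e1 : p - 1 + (j:ℕ) = p + ((j:ℕ)-1) := by omega
        rw [e1, hap _ (by omega), hap _ j.isLt]
    have := uniq hfull (by omega) hpL hw2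
    omega
  have hqm : a (q - 1) = 0 := by
    rcases fin2_em (a (q-1)) with h | h
    · exact h
    exfalso
    have hw2 : wordAt a n (q-1) = wordAt a n p := by
      funext j
      show a (q - 1 + (j:ℕ)) = a (p + (j:ℕ))
      rcases Nat.eq_zero_or_pos (j:ℕ) with h0 | h0
      · have h1 := hap 0 (by omega)
        rw [Nat.add_zero] at h1
        rw [h0, Nat.add_zero, Nat.add_zero, h, h1]
      · have e1 : q - 1 + (j:ℕ) = q + ((j:ℕ)-1) := by omega
        rw [e1, hqa _ (by omega), hap _ j.isLt]
    have := uniq hfull (by omega) hpL hw2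
    omega
  have hw3 : wordAt a n (q-1) = wordAt a n (p-1) := by
    funext j
    show a (q - 1 + (j:ℕ)) = a (p - 1 + (j:ℕ))
    rcases Nat.eq_zero_or_pos (j:ℕ) with h0 | h0
    · rw [h0, Nat.add_zero, Nat.add_zero, hqm, hpm]
    · have e1 : q - 1 + (j:ℕ) = q + ((j:ℕ)-1) := by omega
      have e2 : p - 1 + (j:ℕ) = p + ((j:ℕ)-1) := by omega
      rw [e1, e2, hqa _ (by omega), hap _ (by omega)]
  have := uniq hfull (by omega) (by omega) hw3
  omega

/-- In a complete (de Bruijn) sequence, the final `n-1` symbols are all `0`. -/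
lemma E1 (hn : 2 ≤ n) (ha0 : ∀ i, i < n → a i = 0)
    (hfull : ∀ w : Fin n → Fin 2, ∃! p, p + n ≤ L ∧ wordAt a n p = w) :
    ∀ j, 0 < j → j < n → a (L - n + j) = 0 := by
  have hnL : n ≤ L := by
    obtain ⟨p, ⟨hp, -⟩, -⟩ := hfull (fun _ => 0)
    omega
  by_contra hcon
  push_neg at hcon
  obtain ⟨j0, hj0a, hj0b, hj0⟩ := hcon
  have hj1 : a (L - n + j0) = 1 := by
    rcases fin2_em (a (L-n+j0)) with e | e
    · exact absurd e hj0
    · exact e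
  obtain ⟨s0, ⟨hs0L, hs0w⟩, -⟩ := hfull (fun j => if (j:ℕ)+1 = n then 0 else a (L - n + 1 + (j:ℕ)))
  obtain ⟨s1, ⟨hs1L, hs1w⟩, -⟩ := hfull (fun j => if (j:ℕ)+1 = n then 1 else a (L - n + 1 + (j:ℕ)))
  have hs0v : ∀ j, j < n → a (s0 + j) = if j+1 = n then 0 else a (L-n+1+j) :=
    fun j hj => congrFun hs0w ⟨j, hj⟩
  have hs1v : ∀ j, j < n → a (s1 + j) = if j+1 = n then 1 else a (L-n+1+j) :=
    fun j hj => congrFun hs1w ⟨j, hj⟩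
  have hpos : ∀ s : ℕ, (∀ j, j < n → a (s + j) = if j+1 = n then a (s + (n-1)) else a (L-n+1+j)) →
      1 ≤ s := by
    intro s hsv
    by_contra h
    push_neg at h
    have h0 : s = 0 := by omega
    have h1 := hsv (j0 - 1) (by omega)
    rw [if_neg (by omega), h0, Nat.zero_add] at h1
    have e : L - n + 1 + (j0 - 1) = L - n + j0 := by omega
    rw [e, hj1, ha0 (j0-1) (by omega)] at h1
    exact absurd h1 (by decide)
  have hs0pos : 1 ≤ s0 := by
    apply hpos s0
    intro j hj
    rw [hs0v j hj]
    by_cases hjn : j + 1 = n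
    · rw [if_pos hjn, if_pos hjn, hs0v (n-1) (by omega), if_pos (by omega)]
    · rw [if_neg hjn, if_neg hjn]
  have hs1pos : 1 ≤ s1 := by
    apply hpos s1
    intro j hj
    rw [hs1v j hj]
    by_cases hjn : j + 1 = n
    · rw [if_pos hjn, if_pos hjn, hs1v (n-1) (by omega), if_pos (by omega)]
    · rw [if_neg hjn, if_neg hjn]
  have hpred : ∀ s : ℕ, 1 ≤ s → (∀ j, j < n → (j+1 = n) ∨ a (s + j) = a (L-n+1+j)) →
      wordAt a n (s - 1) = fun (j : Fin n) => if (j:ℕ) = 0 then a (s - 1) else a (L - n + (j:ℕ)) := by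
    intro s hs hsv
    funext j
    show a (s - 1 + (j:ℕ)) = if (j:ℕ) = 0 then a (s - 1) else a (L - n + (j:ℕ))
    by_cases hj : (j:ℕ) = 0
    · rw [hj, Nat.add_zero, if_pos rfl]
    · rw [if_neg hj]
      have e1 : s - 1 + (j:ℕ) = s + ((j:ℕ) - 1) := by omega
      rcases hsv ((j:ℕ)-1) (by omega) with h | h
      · omega
      · rw [e1, h]
        congr 1
        omega
  have hpred0 := hpred s0 hs0pos (by
    intro j hj
    by_cases hjn : j + 1 = n
    · exact Or.inl hjn
    · exact Or.inr (by rw [hs0v j hj, if_neg hjn]))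
  have hpred1 := hpred s1 hs1pos (by
    intro j hj
    by_cases hjn : j + 1 = n
    · exact Or.inl hjn
    · exact Or.inr (by rw [hs1v j hj, if_neg hjn]))
  have hpredM : wordAt a n (L - n) =
      fun (j : Fin n) => if (j:ℕ) = 0 then a (L - n) else a (L - n + (j:ℕ)) := by
    funext j
    show a (L - n + (j:ℕ)) = _
    by_cases hj : (j:ℕ) = 0
    · rw [hj, Nat.add_zero, if_pos rfl]
    · rw [if_neg hj]
  have hne01 : s0 ≠ s1 := by
    intro h
    have h0 := hs0v (n-1) (by omega)
    rw [if_pos (by omega)] at h0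
    have h1 := hs1v (n-1) (by omega)
    rw [if_pos (by omega)] at h1
    rw [h] at h0
    exact absurd (h0.symm.trans h1) (by decide)
  have key : ∀ x y z : Fin 2, x = y ∨ x = z ∨ y = z := by decide
  rcases key (a (s0-1)) (a (s1-1)) (a (L-n)) with hxy | hxz | hyz
  · have hww : wordAt a n (s0-1) = wordAt a n (s1-1) := by rw [hpred0, hpred1, hxy]
    have := uniq hfull (by omega) (by omega) hww
    omega
  · have hww : wordAt a n (s0-1) = wordAt a n (L-n) := by rw [hpred0, hpredM, hxz]
    have := uniq hfull (by omega) (by omega) hww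
    omega
  · have hww : wordAt a n (s1-1) = wordAt a n (L-n) := by rw [hpred1, hpredM, hyz]
    have := uniq hfull (by omega) (by omega) hww
    omega

/-- The symbol just before the final zeros is `1`, and the sequence is long. -/
lemma E2 (hn : 2 ≤ n) (ha0 : ∀ i, i < n → a i = 0)
    (hfull : ∀ w : Fin n → Fin 2, ∃! p, p + n ≤ L ∧ wordAt a n p = w) :
    a (L - n) = 1 ∧ 2 * n ≤ L := by
  have hnL : n ≤ L := by
    obtain ⟨p, ⟨hp, -⟩, -⟩ := hfull (fun _ => 0)
    omega
  have hE1 := E1 hn ha0 hfull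
  have h1 : a (L - n) = 1 := by
    rcases fin2_em (a (L-n)) with e | e
    · exfalso
      have hww : wordAt a n (L-n) = wordAt a n 0 := by
        funext j
        show a (L - n + (j:ℕ)) = a (0 + (j:ℕ))
        rw [Nat.zero_add, ha0 _ j.isLt]
        by_cases hj : (j:ℕ) = 0
        · rw [hj, Nat.add_zero, e]
        · exact hE1 _ (by omega) j.isLt
      have hLn := uniq hfull (by omega) (by omega) hww
      obtain ⟨u, ⟨huL, huw⟩, -⟩ := hfull (fun j => if (j:ℕ) = 0 then 1 else 0)
      have hu0 : u = 0 := by omega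
      have h00 : a (u + 0) = if (0:ℕ) = 0 then (1 : Fin 2) else 0 := congrFun huw ⟨0, by omega⟩
      rw [if_pos rfl, hu0, Nat.add_zero, ha0 0 (by omega)] at h00
      exact absurd h00 (by decide)
    · exact e
  refine ⟨h1, ?_⟩
  by_contra h
  rw [ha0 (L-n) (by omega)] at h1
  exact absurd h1 (by decide)

/-- If `P(0)` prefers `0`, the occurrence of `10^(n-2)1` forces the last word
`10^(n-1)` to have been seen earlier, a contradiction. -/
lemma F2 (hn : 3 ≤ n) (ha0 : ∀ i, i < n → a i = 0)
    (hfull : ∀ w : Fin n → Fin 2, ∃! p, p + n ≤ L ∧ wordAt a n p = w)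
    {P : (Fin 1 → Fin 2) → Fin 2 → Fin 2}
    (hG : GenSeqFrom 2 1 n (zeroWord 2 n) P a L) :
    P (fun _ => 0) 0 = 1 := by
  have hnL : n ≤ L := by
    obtain ⟨p, ⟨hp, -⟩, -⟩ := hfull (fun _ => 0)
    omega
  have hE1 := E1 (by omega) ha0 hfull
  obtain ⟨hM1, hML⟩ := E2 (by omega) ha0 hfull
  obtain ⟨s, ⟨hsL, hsw⟩, -⟩ := hfull (fun j => if (j:ℕ) = 0 ∨ (j:ℕ)+1 = n then 1 else 0)
  have hsv : ∀ j, j < n → a (s + j) = if j = 0 ∨ j+1 = n then 1 else 0 :=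
    fun j hj => congrFun hsw ⟨j, hj⟩
  have hsn : n ≤ s := by
    by_contra h
    push_neg at h
    have h1 := hsv 0 (by omega)
    rw [if_pos (Or.inl rfl), Nat.add_zero, ha0 s h] at h1
    exact absurd h1 (by decide)
  have hsM : s ≠ L - n := by
    intro h
    have h2 := hsv (n-1) (by omega)
    rw [if_pos (Or.inr (by omega)), h] at h2
    have h3 := hE1 (n-1) (by omega) (by omega)
    exact absurd (h2.symm.trans h3) (by decide)
  have hsM' : s + 1 ≤ L - n := by omega
  obtain ⟨i, hik, hseen⟩ := hG.greedy (s + n - 1) (by omega) (by omega)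
  have hw : wordAt a 1 (s + n - 1 - 1) = fun _ => (0 : Fin 2) := by
    rw [word1_eq]
    funext x
    have e : s + n - 1 - 1 = s + (n - 2) := by omega
    rw [e, hsv (n-2) (by omega), if_neg (by omega)]
  have hak : a (s + n - 1) = 1 := by
    have e : s + n - 1 = s + (n-1) := by omega
    rw [e, hsv (n-1) (by omega), if_pos (Or.inr (by omega))]
  rcases fin2_em (P (fun _ => 0) 0) with hP0 | hP0
  swap
  · exact hP0
  exfalso
  have hi1 : i = 1 := by
    rcases fin2_em i with e | e
    · exfalso
      rw [e, hw, hP0] at hik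
      exact absurd (hik.symm.trans hak) (by decide)
    · exact e
  have hs0 := hseen 0 (by rw [hi1]; decide)
  rw [hw, hP0] at hs0
  obtain ⟨q, hqk, hqw⟩ := hs0
  have hqv : ∀ j, j < n → a (q + j) = if j + 1 = n then 0 else a (s + j) := by
    intro j hj
    have h := congrFun hqw ⟨j, hj⟩
    have e : s + n - 1 - (n - 1) = s := by omega
    simpa [wordAt, cand, e] using h
  have hww : wordAt a n q = wordAt a n (L - n) := by
    funext j
    show a (q + (j:ℕ)) = a (L - n + (j:ℕ))
    rw [hqv _ j.isLt]
    by_cases hj0 : (j:ℕ) = 0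
    · have hs1 : a (s + 0) = (1 : Fin 2) := by
        rw [hsv 0 (by omega), if_pos (Or.inl rfl)]
      rw [Nat.add_zero] at hs1
      rw [if_neg (by omega), hj0, Nat.add_zero, Nat.add_zero, hs1, hM1]
    · by_cases hjl : (j:ℕ) + 1 = n
      · rw [if_pos hjl, hE1 _ (by omega) j.isLt]
      · rw [if_neg hjl, hsv _ j.isLt, if_neg (by omega), hE1 _ (by omega) j.isLt]
  have := uniq hfull (by omega) (by omega) hww
  omega

end Aux

/-- The span-0 prefer-one preference function. -/
def prefOne : (Fin 0 → Fin 2) → Fin 2 → Fin 2 := fun _ j => if j = 0 then 1 else 0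

lemma prefOne_pref : IsPrefFun 2 0 prefOne := by
  intro w
  show Function.Bijective (fun j : Fin 2 => if j = 0 then (1 : Fin 2) else 0)
  decide

lemma prefOne0 (w : Fin 0 → Fin 2) : prefOne w 0 = 1 := by
  simp [prefOne]

lemma prefOne1 (w : Fin 0 → Fin 2) : prefOne w 1 = 0 := by
  simp only [prefOne]
  rw [if_neg (by decide)]

/-- For `t = 2`, any preference function of span `1` whose least
preference function has no cycle other than the fixed point at `0` must be the
prefer-one function (after either bit, prefer `1` over `0`); consequently no binary
de Bruijn sequence has preference function complexity exactly `1`. -/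
theorem statement_16 :
    (∀ P : (Fin 1 → Fin 2) → Fin 2 → Fin 2, IsPrefFun 2 1 P →
      OnlyZeroCycle (leastPF (show 0 < 2 by omega) P) →
      ∀ (w : Fin 1 → Fin 2) (i : Fin 2), (P w i : ℕ) = 1 - (i : ℕ)) ∧
    ∀ n, 1 ≤ n → ∀ (a : ℕ → Fin 2) (L : ℕ),
      (∀ i, i < n → (a i : ℕ) = 0) →
      (∀ w : Fin n → Fin 2, ∃! p, p + n ≤ L ∧ wordAt a n p = w) →
      sInf {s : ℕ | ∃ P : (Fin s → Fin 2) → Fin 2 → Fin 2,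
        IsPrefFun 2 s P ∧ GenSeqFrom 2 s n (zeroWord 2 n) P a L} ≠ 1 := by
  constructor
  · -- Part 1
    intro P hP hC w i
    obtain ⟨hz, hcyc⟩ := hC
    have hg : ∀ w' : Fin 1 → Fin 2,
        leastPF (show (0:ℕ) < 2 by omega) P w' = fun _ => P w' 1 := by
      intro w'
      funext j
      have hj : (j : ℕ) + 1 = 1 := by omega
      simp only [leastPF, dif_pos hj]
      congr 1
    have h0 : P (fun _ => 0) 1 = 0 := by
      have h := hz
      rw [hg] at h
      exact congrFun h 0
    have h1 : P (fun _ => 1) 1 = 0 := by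
      rcases fin2_em (P (fun _ => 1) 1) with e | e
      · exact e
      exfalso
      have hfix : leastPF (show (0:ℕ) < 2 by omega) P (fun _ => 1) = fun _ => (1 : Fin 2) := by
        rw [hg]
        funext x
        exact e
      have hcc := hcyc (fun _ => 1) 1 one_pos (by rw [Function.iterate_one]; exact hfix)
      exact absurd (congrFun hcc 0) (by decide)
    have hw : w = fun _ => w 0 := by
      funext j
      have : j = 0 := Subsingleton.elim j 0
      rw [this]
    have hwl : P w 1 = 0 := by
      rcases fin2_em (w 0) with e | e
      · rw [hw, e]; exact h0
      · rw [hw, e]; exact h1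
    have hw0 : P w 0 = 1 := by
      rcases fin2_em (P w 0) with e | e
      · exact absurd ((hP w).1 (e.trans hwl.symm)) (by decide)
      · exact e
    rcases fin2_em i with e | e <;> rw [e]
    · rw [hw0]; rfl
    · rw [hwl]; rfl
  · -- Part 2
    intro n hn a L hinit hfull h
    have ha0 : ∀ i, i < n → a i = 0 := fun i hi => Fin.ext (hinit i hi)
    have hne : {s : ℕ | ∃ P : (Fin s → Fin 2) → Fin 2 → Fin 2,
        IsPrefFun 2 s P ∧ GenSeqFrom 2 s n (zeroWord 2 n) P a L}.Nonempty := by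
      by_contra hcon
      rw [Set.not_nonempty_iff_eq_empty] at hcon
      rw [hcon, Nat.sInf_empty] at h
      exact absurd h (by omega)
    have h1 : 1 ∈ {s : ℕ | ∃ P : (Fin s → Fin 2) → Fin 2 → Fin 2,
        IsPrefFun 2 s P ∧ GenSeqFrom 2 s n (zeroWord 2 n) P a L} := by
      have := Nat.sInf_mem hne
      rwa [h] at this
    obtain ⟨P, hP, hG⟩ := h1
    have hGQ : GenSeqFrom 2 0 n (zeroWord 2 n) prefOne a L := by
      refine ⟨hG.len_ge, hG.init, hG.inj, ?_, hG.maximal⟩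
      intro k hk hkL
      rcases fin2_em (a k) with hak | hak
      · -- a k = 0 : must show the prefer-1 candidate was seen
        refine ⟨1, by rw [prefOne1]; exact hak, ?_⟩
        intro j hj
        have hj0 : j = 0 := by
          rcases fin2_em j with e | e
          · exact e
          · rw [e] at hj; exact absurd hj (by decide)
        rw [hj0, prefOne0]
        rcases Nat.lt_or_ge n 2 with h2 | h2
        · -- n = 1 : impossible, the word 0 occurs only at position 0
          exfalso
          have hn1 : n = 1 := by omega
          subst hn1
          have hww : wordAt a 1 k = wordAt a 1 0 := by
            rw [word1_eq, word1_eq, hak, ha0 0 (by omega)]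
          have := uniq hfull (by omega) (by omega) hww
          omega
        · obtain ⟨i, hik, hseen⟩ := hG.greedy k hk hkL
          have hb : P (wordAt a 1 (k - 1)) 0 = 1 := by
            rw [word1_eq]
            rcases fin2_em (a (k-1)) with hb0 | hb1
            · rcases Nat.lt_or_ge n 3 with h3 | h3
              · -- n = 2 : "00" occurs only at position 0, impossible here
                exfalso
                have hn2 : n = 2 := by omega
                subst hn2
                have hww : wordAt a 2 (k-1) = wordAt a 2 0 := by
                  funext j'
                  show a (k - 1 + (j' : ℕ)) = a (0 + (j' : ℕ))
                  have hj' : (j' : ℕ) = 0 ∨ (j' : ℕ) = 1 := by omega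
                  rcases hj' with e | e
                  · rw [e, Nat.add_zero, hb0, ha0 0 (by omega)]
                  · have ek : k - 1 + 1 = k := by omega
                    rw [e, Nat.zero_add, ek, hak, ha0 1 (by omega)]
                have := uniq hfull (by omega) (by omega) hww
                omega
              · rw [hb0]
                exact F2 h3 ha0 hfull hG
            · rw [hb1]
              exact F3 h2 ha0 hfull hG
          have hi1 : i = 1 := by
            rcases fin2_em i with e | e
            · exfalso
              rw [e, hb] at hik
              exact absurd (hik.symm.trans hak).symm (by decide)
            · exact e
          have hs := hseen 0 (by rw [hi1]; decide)
          rw [hb] at hs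
          exact hs
      · -- a k = 1 : it is the first preference, nothing to check
        refine ⟨0, by rw [prefOne0]; exact hak, ?_⟩
        intro j hj
        exact absurd hj (by
          rcases fin2_em j with e | e <;> rw [e] <;> decide)
    have h0 : 0 ∈ {s : ℕ | ∃ P : (Fin s → Fin 2) → Fin 2 → Fin 2,
        IsPrefFun 2 s P ∧ GenSeqFrom 2 s n (zeroWord 2 n) P a L} :=
      ⟨prefOne, prefOne_pref, hGQ⟩
    have hle := Nat.sInf_le h0
    omega
end DeBruijnPaper
end
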